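/- For every integer i ≥ 1, the infinite series ∑_{t=i}^∞ α_t^i converges and equals 1 + 1/H. -/

import Mathlib

/-- The learning rate `α_t = (H+1)/(H+t)`. -/
noncomputable def lrate (H t : ℕ) : ℝ := (H + 1) / (H + t)

/-- The weight `α_t^i = α_i · ∏_{j=i+1}^t (1 − α_j)`. -/
noncomputable def lrateW (H t i : ℕ) : ℝ :=
  lrate H i * ∏ j ∈ Finset.Icc (i + 1) t, (1 - lrate H j)

/-!
With `R N = ∏_{n<N} (i+n)/(i+n+H)` the weights telescope, `α_{i+N}^i = (1 + 1/H) (R N - R (N+1))`.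
Since `R 0 = 1` and `0 ≤ R N ≤ i/(i+N) → 0`, the series sums to `1 + 1/H`.
-/

open Finset Filter Topology

theorem hasSum_sub_succ_of_antitone {f : ℕ → ℝ} {l : ℝ} (hf : Antitone f)
    (hl : Tendsto f atTop (𝓝 l)) : HasSum (fun n => f n - f (n + 1)) (f 0 - l) := by
  rw [hasSum_iff_tendsto_nat_of_nonneg fun n => sub_nonneg.2 (hf n.le_succ)]
  simp_rw [sum_range_sub']
  exact tendsto_const_nhds.sub hl

theorem prod_range_div_add_one {a : ℝ} (ha : 0 < a) (N : ℕ) :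
    ∏ n ∈ range N, (a + n) / (a + n + 1) = a / (a + N) := by
  induction N with
  | zero => simp [ha.ne']
  | succ N ih =>
    rw [prod_range_succ, ih]
    push_cast
    field_simp
    ring

theorem tendsto_prod_range_div_add_atTop_zero {a b : ℝ} (ha : 0 < a) (hb : 1 ≤ b) :
    Tendsto (fun N : ℕ => ∏ n ∈ range N, (a + n) / (a + n + b)) atTop (𝓝 0) := by
  have hle (N : ℕ) : ∏ n ∈ range N, (a + n) / (a + n + b) ≤ a / (a + N) := by
    rw [← prod_range_div_add_one ha]
    gcongr
  have hlim : Tendsto (fun N : ℕ => a / (a + N)) atTop (𝓝 0) :=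
    tendsto_const_nhds.div_atTop (tendsto_atTop_add_const_left _ _ tendsto_natCast_atTop_atTop)
  exact squeeze_zero (fun N => prod_nonneg fun n _ => by positivity) hle hlim

theorem one_sub_lrate_succ (H t : ℕ) : 1 - lrate H (t + 1) = t / (H + t + 1) := by
  unfold lrate
  push_cast
  field_simp
  ring

theorem lrateW_succ (H : ℕ) {i t : ℕ} (h : i ≤ t) :
    lrateW H (t + 1) i = lrateW H t i * (1 - lrate H (t + 1)) := by
  rw [lrateW, lrateW, prod_Icc_succ_top (by omega), mul_assoc]

theorem lrateW_add (H i N : ℕ) :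
    lrateW H (i + N) i = (H + 1) / (H + i + N) * ∏ n ∈ range N, ((i : ℝ) + n) / (i + n + H) := by
  induction N with
  | zero => simp [lrateW, lrate]
  | succ N ih =>
    rw [← add_assoc, lrateW_succ H (by omega), ih, one_sub_lrate_succ, prod_range_succ]
    push_cast
    field_simp
    ring

theorem lrateW_add_eq_sub (H i N : ℕ) (hH : 0 < H) :
    lrateW H (i + N) i = (1 + 1 / (H : ℝ)) *
      (∏ n ∈ range N, ((i : ℝ) + n) / (i + n + H) -
        ∏ n ∈ range (N + 1), ((i : ℝ) + n) / (i + n + H)) := by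
  have : (H : ℝ) ≠ 0 := by positivity
  rw [lrateW_add, prod_range_succ]
  field_simp
  ring

theorem stmt_5 (H : ℕ) (hH : 1 ≤ H) (i : ℕ) (hi : 1 ≤ i) :
    HasSum (fun n : ℕ => lrateW H (i + n) i) (1 + 1 / (H : ℝ)) := by
  set R : ℕ → ℝ := fun N => ∏ n ∈ range N, ((i : ℝ) + n) / (i + n + H)
  have hR_anti : Antitone R := antitone_nat_of_succ_le fun N => by
    simp only [R, prod_range_succ]
    refine mul_le_of_le_one_right (prod_nonneg fun n _ => by positivity) ?_
    rw [div_le_one (by positivity)]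
    simp
  have hR_lim : Tendsto R atTop (𝓝 0) :=
    tendsto_prod_range_div_add_atTop_zero (by exact_mod_cast hi) (by exact_mod_cast hH)
  have hR_sum := (hasSum_sub_succ_of_antitone hR_anti hR_lim).mul_left (1 + 1 / (H : ℝ))
  simpa only [R, ← lrateW_add_eq_sub H i _ hH, prod_range_zero, sub_zero, mul_one] using hR_sum
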